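/- For every positive integer X, log(X!) ≥ X · Σ_{p ≤ X} (log p)/p − π(X) · log X, where the sum and π(X) range over primes p ≤ X. -/

import Mathlib

/-! Factoring `X!` gives `log X! = ∑_{p ≤ X} v_p(X!) log p`. Keeping only the first term of
Legendre's formula `v_p(X!) = ∑_j ⌊X/p^j⌋` gives `v_p(X!) ≥ ⌊X/p⌋ ≥ X/p - 1`, so each prime
contributes at least `(X/p - 1) log p ≥ X log p / p - log X`. -/

open Nat Real

theorem Nat.primeFactors_factorial (n : ℕ) : (n !).primeFactors = primesLE n := by
  ext p
  simp only [mem_primeFactors, mem_primesLE, ne_eq, factorial_ne_zero, not_false_eq_true,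
    and_true]
  exact ⟨fun ⟨hp, hdvd⟩ => ⟨hp.dvd_factorial.mp hdvd, hp⟩,
    fun ⟨hpn, hp⟩ => ⟨hp, hp.dvd_factorial.mpr hpn⟩⟩

theorem Nat.div_le_factorization_factorial {p : ℕ} (hp : p.Prime) (n : ℕ) :
    n / p ≤ (n !).factorization p := by
  rw [factorization_factorial hp (show log p n < log p n + 2 by omega)]
  simpa using Finset.single_le_sum (f := fun i => n / p ^ i) (fun _ _ => Nat.zero_le _)
    (show 1 ∈ Finset.Ico 1 (log p n + 2) by simp)

theorem Real.log_factorial_eq_sum_primesLE (n : ℕ) :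
    Real.log n ! = ∑ p ∈ primesLE n, (n !).factorization p * Real.log p := by
  rw [log_nat_eq_sum_factorization, Finsupp.sum, support_factorization, primeFactors_factorial]

theorem Nat.cast_div_sub_one_le {K : Type*} [Field K] [LinearOrder K] [IsStrictOrderedRing K]
    [FloorSemiring K] (n p : ℕ) : (n : K) / p - 1 ≤ (n / p : ℕ) := by
  rw [← Nat.floor_div_eq_div (K := K)]
  exact (Nat.sub_one_lt_floor _).le

theorem Real.mul_log_div_sub_log_le_factorization_factorial {n p : ℕ} (hp : p.Prime)
    (hpn : p ≤ n) :
    n * (Real.log p / p) - Real.log n ≤ (n !).factorization p * Real.log p := by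
  have hp_pos : (0 : ℝ) < p := by exact_mod_cast hp.pos
  have hlog_le : Real.log p ≤ Real.log n := log_le_log hp_pos (by exact_mod_cast hpn)
  have hlog_nonneg : 0 ≤ Real.log p := log_nonneg (by exact_mod_cast hp.one_le)
  calc n * (Real.log p / p) - Real.log n ≤ ((n : ℝ) / p - 1) * Real.log p := by
        rw [sub_one_mul, mul_div_assoc', div_mul_eq_mul_div, mul_comm (n : ℝ)]
        linarith
    _ ≤ (n / p : ℕ) * Real.log p := by gcongr; exact cast_div_sub_one_le n p
    _ ≤ (n !).factorization p * Real.log p := by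
        gcongr; exact_mod_cast div_le_factorization_factorial hp n

theorem stmt_9_general (X : ℕ) :
    Real.log (X.factorial) ≥
      X * ∑ p ∈ Finset.filter Nat.Prime (Finset.range (X + 1)), Real.log p / p -
        ((Finset.filter Nat.Prime (Finset.range (X + 1))).card : ℝ) * Real.log X := by
  rw [← primesLE_eq_filter_range, log_factorial_eq_sum_primesLE, ge_iff_le, Finset.mul_sum,
    ← nsmul_eq_mul, ← Finset.sum_const, ← Finset.sum_sub_distrib]
  refine Finset.sum_le_sum fun p hp => ?_
  obtain ⟨hpX, hp⟩ := mem_primesLE.mp hp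
  exact mul_log_div_sub_log_le_factorization_factorial hp hpX

theorem stmt_9 (X : ℕ) (hX : 0 < X) :
    Real.log (X.factorial) ≥
      X * ∑ p ∈ Finset.filter Nat.Prime (Finset.range (X + 1)), Real.log p / p -
        ((Finset.filter Nat.Prime (Finset.range (X + 1))).card : ℝ) * Real.log X :=
  stmt_9_general X
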